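/- arXiv:1609.03621 — 3 statements merged into one kernel-verified Lean document; each statement's English description precedes it below -/
import Mathlib

section
/- Let (Ω, μ) be a probability space, 0 < q < p < ∞, and suppose g is a positive measurable function with ‖g‖_{r,∞} = 1 where 1/r = 1/q - 1/p, and f₁, …, fₙ are nonnegative measurable functions with ‖f_j/g‖_{p,∞} ≤ C for all j. Then for all scalars c₁, …, cₙ, ‖sup_j |c_j f_j|‖_{q,∞} ≤ C' (Σ_j |c_j|^p)^{1/p}, where C' depends only on C, p, q, r. -/
open MeasureTheory ENNReal Filter

/-- The weak-`L_s` quasi-norm `‖f‖_{s,∞} = sup_{t>0} t · μ({|f| > t})^{1/s}`. -/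
noncomputable def weakNorm {Ω : Type*} [MeasurableSpace Ω] (μ : Measure Ω) (s : ℝ)
    (f : Ω → ℝ) : ℝ≥0∞ :=
  ⨆ (t : ℝ) (_ : 0 < t), ENNReal.ofReal t * μ {ω | t < |f ω|} ^ (1 / s)

/-!
Fix a level `t > 0` and a threshold `s > 0`. If `|c_j f_j ω| > t` then either `g ω > s`, or
`|f_j ω / g ω| > t / (|c_j| s)`. Chebyshev's inequality for the weak norms bounds the measure of
the first set by `s^{-r}` and that of the second by `(C s |c_j| / t)^p`, so with
`A = (Σ_j |c_j|^p)^{1/p}` the level set of `sup_j |c_j f_j|` has measure at most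
`s^{-r} + (C s A / t)^p`. The choice `s = (C A / t)^{-q/r}` balances the two terms, each becoming
`(C A / t)^q` because `p (1 - q/r) = q`; this gives `C' = 2^{1/q} C`.
-/

section WeakNorm

variable {Ω : Type*} [MeasurableSpace Ω] (μ : Measure Ω) {s : ℝ} {f : Ω → ℝ}

theorem measure_lt_abs_le_of_weakNorm_le (hs : 0 < s) {B : ℝ} (hB : 0 ≤ B)
    (h : weakNorm μ s f ≤ ENNReal.ofReal B) {t : ℝ} (ht : 0 < t) :
    μ {ω | t < |f ω|} ≤ ENNReal.ofReal ((B / t) ^ s) := by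
  have hle : ENNReal.ofReal t * μ {ω | t < |f ω|} ^ (1 / s) ≤ ENNReal.ofReal B :=
    (le_iSup₂ (f := fun t (_ : 0 < t) => ENNReal.ofReal t * μ {ω | t < |f ω|} ^ (1 / s)) t ht).trans
      h
  have hroot : μ {ω | t < |f ω|} ^ (1 / s) ≤ ENNReal.ofReal (B / t) := by
    rw [ENNReal.ofReal_div_of_pos ht,
      ENNReal.le_div_iff_mul_le (Or.inl (by simpa using ht)) (Or.inl ofReal_ne_top), mul_comm]
    exact hle
  calc μ {ω | t < |f ω|} = (μ {ω | t < |f ω|} ^ (1 / s)) ^ s := by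
        rw [← ENNReal.rpow_mul, one_div_mul_cancel hs.ne', ENNReal.rpow_one]
    _ ≤ ENNReal.ofReal (B / t) ^ s := ENNReal.rpow_le_rpow hroot hs.le
    _ = ENNReal.ofReal ((B / t) ^ s) := ENNReal.ofReal_rpow_of_nonneg (by positivity) hs.le

theorem weakNorm_le_of_measure_le (hs : 0 < s) {K : ℝ} (hK : 0 ≤ K)
    (h : ∀ t, 0 < t → μ {ω | t < |f ω|} ≤ ENNReal.ofReal ((K / t) ^ s)) :
    weakNorm μ s f ≤ ENNReal.ofReal K := by
  refine iSup₂_le fun t ht => ?_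
  calc ENNReal.ofReal t * μ {ω | t < |f ω|} ^ (1 / s)
      ≤ ENNReal.ofReal t * ENNReal.ofReal ((K / t) ^ s) ^ (1 / s) := by
        gcongr
        exact h t ht
    _ = ENNReal.ofReal K := by
        rw [ENNReal.ofReal_rpow_of_nonneg (by positivity) (by positivity),
          ← Real.rpow_mul (by positivity), mul_one_div_cancel hs.ne', Real.rpow_one,
          ← ENNReal.ofReal_mul ht.le, mul_div_cancel₀ _ ht.ne']

end WeakNorm

theorem setOf_lt_abs_iSup_subset {Ω ι : Type*} (f : ι → Ω → ℝ) (c : ι → ℝ) {t : ℝ}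
    (ht : 0 < t) (g : Ω → ℝ) (s : ℝ) :
    {ω | t < |(⨆ j, |c j * f j ω|)|} ⊆
      {ω | s < |g ω|} ∪ ⋃ j, {ω | t < |c j| * |f j ω| ∧ |g ω| ≤ s} := by
  intro ω hω
  simp only [Set.mem_ofPred_eq, abs_of_nonneg (Real.iSup_nonneg fun j => abs_nonneg _)] at hω
  obtain ⟨j, hj⟩ : ∃ j, t < |c j * f j ω| := by
    by_contra! hle
    exact (Real.iSup_le hle ht.le).not_gt hω
  rw [abs_mul] at hj
  by_cases hgs : |g ω| ≤ s
  · exact Or.inr (Set.mem_iUnion.mpr ⟨j, hj, hgs⟩)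
  · exact Or.inl (not_le.mp hgs)

section Nikishin

variable {Ω : Type*} [MeasurableSpace Ω] (μ : Measure Ω) {p r C t s : ℝ} {g : Ω → ℝ}

theorem measure_lt_mul_abs_and_abs_le_le (hp : 0 < p) (hC : 0 ≤ C) (ht : 0 < t) (hs : 0 < s)
    (hg : ∀ ω, g ω ≠ 0) {f : Ω → ℝ} (hf : weakNorm μ p (fun ω => f ω / g ω) ≤ ENNReal.ofReal C)
    {a : ℝ} (ha : 0 ≤ a) :
    μ {ω | t < a * |f ω| ∧ |g ω| ≤ s} ≤ ENNReal.ofReal ((C * s * a / t) ^ p) := by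
  rcases ha.eq_or_lt with rfl | ha
  · simp [not_lt.mpr ht.le]
  have hsub : {ω | t < a * |f ω| ∧ |g ω| ≤ s} ⊆ {ω | t / (a * s) < |f ω / g ω|} := by
    rintro ω ⟨hft, hgs⟩
    have hg0 : 0 < |g ω| := abs_pos.mpr (hg ω)
    calc t / (a * s) < a * |f ω| / (a * s) := by gcongr
      _ = |f ω| / s := by field_simp
      _ ≤ |f ω| / |g ω| := by gcongr
      _ = |f ω / g ω| := (abs_div _ _).symm
  calc μ {ω | t < a * |f ω| ∧ |g ω| ≤ s} ≤ μ {ω | t / (a * s) < |f ω / g ω|} := measure_mono hsub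
    _ ≤ ENNReal.ofReal ((C / (t / (a * s))) ^ p) :=
        measure_lt_abs_le_of_weakNorm_le μ hp hC hf (by positivity)
    _ = ENNReal.ofReal ((C * s * a / t) ^ p) := by
        congr 2
        field_simp

theorem measure_lt_abs_iSup_le {ι : Type*} [Fintype ι] (hp : 0 < p) (hr : 0 < r) (hC : 0 ≤ C)
    (ht : 0 < t) (hs : 0 < s) (hg0 : ∀ ω, g ω ≠ 0) (hg : weakNorm μ r g ≤ 1)
    {f : ι → Ω → ℝ} (hf : ∀ j, weakNorm μ p (fun ω => f j ω / g ω) ≤ ENNReal.ofReal C)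
    (c : ι → ℝ) :
    μ {ω | t < |(⨆ j, |c j * f j ω|)|} ≤
      ENNReal.ofReal ((1 / s) ^ r + (C * s / t) ^ p * ∑ j, |c j| ^ p) := by
  have hgs : μ {ω | s < |g ω|} ≤ ENNReal.ofReal ((1 / s) ^ r) :=
    measure_lt_abs_le_of_weakNorm_le μ hr zero_le_one (by rwa [ENNReal.ofReal_one]) hs
  calc μ {ω | t < |(⨆ j, |c j * f j ω|)|}
      ≤ μ ({ω | s < |g ω|} ∪ ⋃ j, {ω | t < |c j| * |f j ω| ∧ |g ω| ≤ s}) :=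
        measure_mono (setOf_lt_abs_iSup_subset f c ht g s)
    _ ≤ μ {ω | s < |g ω|} + ∑ j, μ {ω | t < |c j| * |f j ω| ∧ |g ω| ≤ s} :=
        (measure_union_le _ _).trans (by gcongr; exact measure_iUnion_fintype_le μ _)
    _ ≤ ENNReal.ofReal ((1 / s) ^ r) + ∑ j, ENNReal.ofReal ((C * s * |c j| / t) ^ p) := by
        gcongr with j
        exact measure_lt_mul_abs_and_abs_le_le μ hp hC ht hs hg0 (hf j) (abs_nonneg _)
    _ = ENNReal.ofReal ((1 / s) ^ r + (C * s / t) ^ p * ∑ j, |c j| ^ p) := by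
        have hterm : ∀ j, (C * s * |c j| / t) ^ p = (C * s / t) ^ p * |c j| ^ p := fun j => by
          rw [← Real.mul_rpow (by positivity) (abs_nonneg _), mul_div_right_comm]
        simp_rw [hterm]
        rw [← ENNReal.ofReal_sum_of_nonneg (fun j _ => by positivity), ← Finset.mul_sum,
          ← ENNReal.ofReal_add (by positivity) (by positivity)]

end Nikishin

theorem one_div_rpow_add_mul_rpow_eq {p q r u : ℝ} (hu : 0 < u) (hp : p ≠ 0) (hq : q ≠ 0)
    (hr : r ≠ 0) (hpqr : 1 / r = 1 / q - 1 / p) :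
    (1 / u ^ (-(q / r))) ^ r + (u * u ^ (-(q / r))) ^ p = 2 * u ^ q := by
  have hexp : (1 - q / r) * p = q := by
    rw [div_eq_mul_one_div q r, hpqr]
    field_simp
    ring
  have hmul : u * u ^ (-(q / r)) = u ^ (1 - q / r) := by
    rw [sub_eq_add_neg, Real.rpow_add hu, Real.rpow_one]
  rw [hmul, Real.rpow_neg hu.le, one_div, inv_inv, ← Real.rpow_mul hu.le, div_mul_cancel₀ _ hr,
    ← Real.rpow_mul hu.le, hexp, two_mul]

/-- N1 ⇒ N2 of the extended Nikishin theorem: if `‖g‖_{r,∞} = 1` and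
`‖f_j/g‖_{p,∞} ≤ C` then the maximal estimate
`‖sup_j |c_j f_j|‖_{q,∞} ≤ C' (Σ_j |c_j|^p)^{1/p}` holds, with `C'` depending
only on `C, p, q, r`. -/
theorem nikishin_N1_implies_N2 (q p r C : ℝ) (hq : 0 < q) (hqp : q < p)
    (hr : 1 / r = 1 / q - 1 / p) (hC : 0 < C) :
    ∃ C' : ℝ, 0 < C' ∧
      ∀ (Ω : Type) (_ : MeasurableSpace Ω) (μ : Measure Ω), IsProbabilityMeasure μ →
        ∀ g : Ω → ℝ, Measurable g → (∀ ω, 0 < g ω) → weakNorm μ r g = 1 →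
        ∀ (n : ℕ) (f : Fin n → Ω → ℝ), (∀ j, Measurable (f j)) → (∀ j ω, 0 ≤ f j ω) →
          (∀ j, weakNorm μ p (fun ω => f j ω / g ω) ≤ ENNReal.ofReal C) →
        ∀ c : Fin n → ℝ,
          weakNorm μ q (fun ω => ⨆ j, |c j * f j ω|) ≤
            ENNReal.ofReal (C' * (∑ j, |c j| ^ p) ^ (1 / p)) := by
  have hp : 0 < p := hq.trans hqp
  have hr0 : 0 < r := one_div_pos.mp (hr ▸ sub_pos.mpr (one_div_lt_one_div_of_lt hq hqp))
  refine ⟨2 ^ (1 / q) * C, by positivity, ?_⟩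
  intro Ω _ μ _ g _ hg hgr n f _ _ hf c
  refine weakNorm_le_of_measure_le μ hq (by positivity) fun t ht => ?_
  rcases (Finset.sum_nonneg fun j _ => by positivity : 0 ≤ ∑ j, |c j| ^ p).eq_or_lt with hsum | hsum
  · have hc : ∀ j, c j = 0 := fun j => by
      have hcj := (Finset.sum_eq_zero_iff_of_nonneg fun j _ => by positivity).mp hsum.symm j
      simpa [hp.ne'] using hcj (Finset.mem_univ j)
    simp [hc, not_lt.mpr ht.le]
  set A := (∑ j, |c j| ^ p) ^ (1 / p)
  set u := C * A / t
  have hu : 0 < u := by positivity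
  calc μ {ω | t < |(⨆ j, |c j * f j ω|)|}
      ≤ ENNReal.ofReal ((1 / u ^ (-(q / r))) ^ r + (C * u ^ (-(q / r)) / t) ^ p * ∑ j, |c j| ^ p) :=
        measure_lt_abs_iSup_le μ hp hr0 hC.le ht (by positivity) (fun ω => (hg ω).ne') hgr.le hf c
    _ = ENNReal.ofReal ((2 ^ (1 / q) * C * A / t) ^ q) := by
        have hApow : ∑ j, |c j| ^ p = A ^ p := by
          rw [← Real.rpow_mul hsum.le, one_div_mul_cancel hp.ne', Real.rpow_one]
        have hscale : (C * u ^ (-(q / r)) / t) ^ p * A ^ p = (u * u ^ (-(q / r))) ^ p := by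
          rw [← Real.mul_rpow (by positivity) (by positivity)]
          congr 1
          simp only [u]
          ring
        rw [hApow, hscale, one_div_rpow_add_mul_rpow_eq hu hp.ne' hq.ne' hr0.ne' hr,
          show 2 ^ (1 / q) * C * A / t = 2 ^ (1 / q) * u by ring,
          Real.mul_rpow (by positivity) hu.le, ← Real.rpow_mul zero_le_two,
          one_div_mul_cancel hq.ne', Real.rpow_one]
end

section
/- Let (Ω, μ) be a probability space, 0 < q < p, and suppose (B_j) is a countable family of pairwise disjoint measurable sets and (f_j) ⊆ 𝓕 are functions with μ(B_j)·|f_j(ω)|^p > ε^{-p/q} for all ω ∈ B_j. If the maximal estimate ‖sup_j |c_j f_j|‖_{q,∞} ≤ (Σ_j |c_j|^p)^{1/p} holds for all finitely supported scalar sequences (c_j), then μ(∪_j B_j) ≤ ε^{p/(p-q)}. -/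
open MeasureTheory ENNReal Filter

lemma real_key (q p ε m : ℝ) (hq : 0 < q) (hqp : q < p) (hε : 0 < ε) (hm : 0 < m)
    (h : ε ^ (-(1/q)) * m ^ (1/q) ≤ m ^ (1/p)) : m ≤ ε ^ (p/(p-q)) := by
  have hp : 0 < p := hq.trans hqp
  have hpq : 0 < p - q := by linarith
  have hd : m ^ (1/q - 1/p) ≤ ε ^ (1/q) := by
    have h1 : m ^ (1/q) ≤ ε ^ (1/q) * m ^ (1/p) := by
      have h0 := mul_le_mul_of_nonneg_left h (Real.rpow_pos_of_pos hε (1/q)).le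
      rwa [← mul_assoc, ← Real.rpow_add hε, add_neg_cancel, Real.rpow_zero, one_mul] at h0
    have h2 : m ^ (1/q - 1/p) * m ^ (1/p) ≤ ε ^ (1/q) * m ^ (1/p) := by
      rwa [← Real.rpow_add hm, sub_add_cancel]
    exact le_of_mul_le_mul_right h2 (Real.rpow_pos_of_pos hm _)
  have hr : 0 < p * q / (p - q) := by positivity
  have h3 := Real.rpow_le_rpow (Real.rpow_nonneg hm.le _) hd hr.le
  rw [← Real.rpow_mul hm.le, ← Real.rpow_mul hε.le] at h3
  have e1 : (1/q - 1/p) * (p * q / (p - q)) = 1 := by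
    field_simp
  have e2 : (1/q) * (p * q / (p - q)) = p / (p - q) := by
    field_simp
  rwa [e1, e2, Real.rpow_one] at h3

/-- If `(B_j)` are pairwise disjoint sets witnessing `ε`-badness for functions `f_j`,
and the maximal estimate (with constant 1) holds, then `μ(⋃_j B_j) ≤ ε^{p/(p-q)}`. -/
theorem bad_sets_union_measure_bound {Ω : Type*} [MeasurableSpace Ω] (μ : Measure Ω)
    [IsProbabilityMeasure μ] (q p : ℝ) (hq : 0 < q) (hqp : q < p)
    (ε : ℝ) (hε0 : 0 < ε) (hε1 : ε < 1)
    (B : ℕ → Set Ω) (hBmeas : ∀ j, MeasurableSet (B j))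
    (hBdisj : Pairwise (Function.onFun Disjoint B))
    (f : ℕ → Ω → ℝ) (hfmeas : ∀ j, Measurable (f j))
    (hbad : ∀ j, ∀ ω ∈ B j, ε ^ (-(p / q)) < (μ (B j)).toReal * |f j ω| ^ p)
    (hmax : ∀ (s : Finset ℕ) (c : ℕ → ℝ),
      weakNorm μ q (fun ω => ⨆ j ∈ s, |c j * f j ω|) ≤
        ENNReal.ofReal ((∑ j ∈ s, |c j| ^ p) ^ (1 / p))) :
    μ (⋃ j, B j) ≤ ENNReal.ofReal (ε ^ (p / (p - q))) := by
  have hp : 0 < p := hq.trans hqp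
  rw [measure_iUnion hBdisj hBmeas, ENNReal.tsum_eq_iSup_sum]
  refine iSup_le fun s => ?_
  set c : ℕ → ℝ := fun j => (μ (B j)).toReal ^ (1/p) with hc
  have hμfin : ∀ j, μ (B j) ≠ ⊤ := fun j => (measure_lt_top μ _).ne
  set M : ℝ≥0∞ := ∑ j ∈ s, μ (B j) with hM
  have hMt : M ≠ ⊤ := by
    rw [hM]
    exact (ENNReal.sum_lt_top.mpr fun j _ => (measure_lt_top μ _)).ne
  set m : ℝ := M.toReal with hmdef
  by_cases hm0 : m = 0
  · have : M = 0 := by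
      rw [← ENNReal.ofReal_toReal hMt, ← hmdef, hm0, ENNReal.ofReal_zero]
    simp [this]
  have hmpos : 0 < m := lt_of_le_of_ne ENNReal.toReal_nonneg (Ne.symm hm0)
  have hcp : ∀ j, |c j| ^ p = (μ (B j)).toReal := by
    intro j
    rw [hc, abs_of_nonneg (Real.rpow_nonneg ENNReal.toReal_nonneg _),
      ← Real.rpow_mul ENNReal.toReal_nonneg, one_div_mul_cancel hp.ne', Real.rpow_one]
  have hsum : ∑ j ∈ s, |c j| ^ p = m := by
    rw [hmdef, hM, ENNReal.toReal_sum (fun j _ => hμfin j)]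
    exact Finset.sum_congr rfl fun j _ => hcp j
  set t : ℝ := ε ^ (-(1/q)) with ht
  have htpos : 0 < t := Real.rpow_pos_of_pos hε0 _
  set F : Ω → ℝ := fun ω => ⨆ j ∈ s, |c j * f j ω| with hF
  -- pointwise estimate
  have hpt : ∀ j ∈ s, ∀ ω ∈ B j, t < F ω := by
    intro j hj ω hω
    have hbd : BddAbove (Set.range fun k => ⨆ _ : k ∈ s, |c k * f k ω|) := by
      refine ⟨∑ i ∈ s, |c i * f i ω|, ?_⟩
      rintro x ⟨k, rfl⟩
      dsimp only
      by_cases hk : k ∈ s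
      · rw [ciSup_pos hk]
        exact Finset.single_le_sum (f := fun i => |c i * f i ω|) (fun i _ => abs_nonneg _) hk
      · haveI : IsEmpty (k ∈ s) := ⟨hk⟩
        rw [Real.iSup_of_isEmpty]
        exact Finset.sum_nonneg fun i _ => abs_nonneg _
    have hle : |c j * f j ω| ≤ F ω := by
      have h0 := le_ciSup hbd j
      rwa [ciSup_pos hj] at h0
    refine lt_of_lt_of_le ?_ hle
    by_contra hcon
    push_neg at hcon
    have h1 : |c j * f j ω| ^ p ≤ t ^ p :=
      Real.rpow_le_rpow (abs_nonneg _) hcon hp.le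
    have h2 : |c j * f j ω| ^ p = (μ (B j)).toReal * |f j ω| ^ p := by
      rw [abs_mul, Real.mul_rpow (abs_nonneg _) (abs_nonneg _), hcp j]
    have h3 : t ^ p = ε ^ (-(p/q)) := by
      rw [ht, ← Real.rpow_mul hε0.le]
      ring_nf
    rw [h2, h3] at h1
    exact absurd (hbad j ω hω) (not_lt.mpr h1)
  -- measure lower bound
  have hsub : (⋃ j ∈ s, B j) ⊆ {ω | t < |F ω|} := by
    rintro ω hω
    simp only [Set.mem_iUnion] at hω
    obtain ⟨j, hj, hωj⟩ := hω
    exact lt_of_lt_of_le (hpt j hj ω hωj) (le_abs_self _)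
  have hmeas_lb : M ≤ μ {ω | t < |F ω|} := by
    calc M = μ (⋃ j ∈ s, B j) :=
            (measure_biUnion_finset (hBdisj.set_pairwise _) (fun j _ => hBmeas j)).symm
      _ ≤ _ := measure_mono hsub
  -- weakNorm lower bound
  have hwn : ENNReal.ofReal t * M ^ (1/q) ≤ weakNorm μ q F := by
    rw [weakNorm]
    refine le_iSup₂_of_le t htpos ?_
    exact mul_le_mul_right (ENNReal.rpow_le_rpow hmeas_lb (by positivity)) _
  have hchain : ENNReal.ofReal (t * m ^ (1/q)) ≤ ENNReal.ofReal (m ^ (1/p)) := by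
    calc ENNReal.ofReal (t * m ^ (1/q))
        = ENNReal.ofReal t * M ^ (1/q) := by
          rw [ENNReal.ofReal_mul htpos.le, ← ENNReal.ofReal_rpow_of_pos hmpos,
            ENNReal.ofReal_toReal hMt]
      _ ≤ weakNorm μ q F := hwn
      _ ≤ ENNReal.ofReal ((∑ j ∈ s, |c j| ^ p) ^ (1 / p)) := hmax s c
      _ = ENNReal.ofReal (m ^ (1/p)) := by rw [hsum]
  have hreal : t * m ^ (1/q) ≤ m ^ (1/p) :=
    (ENNReal.ofReal_le_ofReal_iff (Real.rpow_nonneg hmpos.le _)).mp hchain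
  have hfin : m ≤ ε ^ (p/(p-q)) := real_key q p ε m hq hqp hε0 hmpos hreal
  calc M = ENNReal.ofReal m := (ENNReal.ofReal_toReal hMt).symm
    _ ≤ ENNReal.ofReal (ε ^ (p/(p-q))) := ENNReal.ofReal_le_ofReal hfin
end

section
/- Let 0 < q < p < ∞ with 1/r = 1/q - 1/p, and let (Ω,μ) be a probability space. Suppose 𝓕 is a family of nonnegative measurable functions satisfying: ‖sup_j |c_j f_j|‖_{q,∞} ≤ C(Σ_j |c_j|^p)^{1/p} for all finite choices f_j ∈ 𝓕 and scalars c_j. Then for every 0 < δ < 1 there exists a measurable set E_δ with μ(E_δ) ≥ 1 - δ and sup_{f∈𝓕} ‖1_{E_δ} f‖_{p,∞} ≤ C δ^{-1/r}. -/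
open MeasureTheory ENNReal Filter

/-!
Fix `K = C δ^{-1/r}` and call a measurable set `A` bad if `A ⊆ {t < |f|}` for some `f ∈ 𝓕` and
`t > 0` with `t μ(A)^{1/p} > K`. Testing the maximal inequality with `c_j = 1/t_j` on finitely many
disjoint bad sets `A_j` gives
`μ(⋃ A_j)^{1/q} ≤ C (∑ t_j^{-p})^{1/p} ≤ (C/K) μ(⋃ A_j)^{1/p}`, that is `μ(⋃ A_j) ≤ δ`. A maximal disjoint family of bad sets (Zorn) is countable, so its union `U` also has
measure at most `δ`, and `E = Uᶜ` contains no bad set, which is the bound `‖1_E f‖_{p,∞} ≤ K`.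
-/

open Set Function

theorem inv_rpow_le_div_rpow_of_lt_mul_rpow {K t m p : ℝ} (hK : 0 < K) (ht : 0 < t) (hm : 0 ≤ m)
    (hp : 0 < p) (h : K < t * m ^ (1 / p)) : t⁻¹ ^ p ≤ m / K ^ p := by
  have hpow : K ^ p ≤ t ^ p * m := by
    have := Real.rpow_le_rpow hK.le h.le hp.le
    rwa [Real.mul_rpow ht.le (by positivity), ← Real.rpow_mul hm, one_div_mul_cancel hp.ne',
      Real.rpow_one] at this
  rw [Real.inv_rpow ht.le, le_div_iff₀ (by positivity), inv_mul_le_iff₀ (by positivity)]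
  exact hpow

theorem le_of_rpow_add_le_mul_rpow {M δ b e : ℝ} (hM : 0 ≤ M) (hδ : 0 ≤ δ) (he : 0 < e)
    (h : M ^ (b + e) ≤ δ ^ e * M ^ b) : M ≤ δ := by
  rcases hM.eq_or_lt with rfl | hM
  · exact hδ
  rw [Real.rpow_add hM, mul_comm] at h
  exact (Real.rpow_le_rpow_iff hM.le hδ he).1 (le_of_mul_le_mul_right h (by positivity))

theorem exists_maximal_pairwiseDisjoint {α : Type*} (P : Set α → Prop) :
    ∃ 𝒜 : Set (Set α), (∀ A ∈ 𝒜, P A) ∧ 𝒜.PairwiseDisjoint id ∧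
      ∀ B, P B → Disjoint B (⋃₀ 𝒜) → B = ∅ := by
  obtain ⟨𝒜, ⟨hP, hd⟩, hmax⟩ :=
    zorn_subset {𝒜 : Set (Set α) | (∀ A ∈ 𝒜, P A) ∧ 𝒜.PairwiseDisjoint id}
      fun c hc hchain => ⟨⋃₀ c,
        ⟨fun A ⟨_, h𝒜, hA⟩ => (hc h𝒜).1 A hA,
          (hchain.pairwiseDisjoint_sUnion id).2 fun _ h𝒜 => (hc h𝒜).2⟩,
        fun _ => subset_sUnion_of_mem⟩
  refine ⟨𝒜, hP, hd, fun B hB hdisj => ?_⟩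
  have hB𝒜 : B ∈ 𝒜 :=
    hmax ⟨forall_mem_insert.2 ⟨hB, hP⟩,
      hd.insert fun A hA _ => hdisj.mono_right (subset_sUnion_of_mem hA)⟩
      (subset_insert _ _) (mem_insert _ _)
  exact hdisj.eq_bot_of_le (subset_sUnion_of_mem hB𝒜)

section Measure

variable {Ω : Type*} [MeasurableSpace Ω] {μ : Measure Ω}

theorem Set.PairwiseDisjoint.countable_of_measure_ne_zero [SFinite μ] {𝒜 : Set (Set Ω)}
    (hd : 𝒜.PairwiseDisjoint id) (hm : ∀ A ∈ 𝒜, MeasurableSet A) (h0 : ∀ A ∈ 𝒜, μ A ≠ 0) :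
    𝒜.Countable := by
  have := Measure.countable_meas_pos_of_disjoint_iUnion₀ (μ := μ) (As := ((↑) : 𝒜 → Set Ω))
    (fun A => (hm A A.2).nullMeasurableSet)
    fun A B hAB => (hd A.2 B.2 (Subtype.coe_ne_coe.2 hAB)).aedisjoint
  rw [← Set.countable_coe_iff, ← Set.countable_univ_iff]
  convert this
  ext A
  simp [pos_iff_ne_zero, h0 A A.2]

theorem measure_sUnion_le_of_forall_finset {𝒜 : Set (Set Ω)} (hc : 𝒜.Countable)
    (hd : 𝒜.PairwiseDisjoint id) (hm : ∀ A ∈ 𝒜, MeasurableSet A) {a : ℝ≥0∞}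
    (h : ∀ 𝒮 : Finset (Set Ω), ↑𝒮 ⊆ 𝒜 → μ (⋃ A ∈ 𝒮, A) ≤ a) : μ (⋃₀ 𝒜) ≤ a := by
  rw [measure_sUnion hc hd hm, ENNReal.tsum_eq_iSup_sum]
  refine iSup_le fun 𝒮 => ?_
  have h𝒮 : ↑(𝒮.map (Embedding.subtype _)) ⊆ 𝒜 := by simp
  calc ∑ A ∈ 𝒮, μ A
      _ = ∑ A ∈ 𝒮.map (Embedding.subtype _), μ A := by rw [Finset.sum_map]; rfl
      _ = μ (⋃ A ∈ 𝒮.map (Embedding.subtype _), A) :=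
        (measure_biUnion_finset (hd.subset h𝒮) fun A hA => hm A (h𝒮 hA)).symm
      _ ≤ a := h _ h𝒮

theorem ofReal_mul_measure_rpow_le_weakNorm (μ : Measure Ω) {s t : ℝ} (hs : 0 ≤ s) (ht : 0 < t)
    {g : Ω → ℝ} {A : Set Ω} (hA : A ⊆ {ω | t < |g ω|}) :
    ENNReal.ofReal t * μ A ^ (1 / s) ≤ weakNorm μ s g :=
  calc ENNReal.ofReal t * μ A ^ (1 / s)
    _ ≤ ENNReal.ofReal t * μ {ω | t < |g ω|} ^ (1 / s) := by gcongr
    _ ≤ weakNorm μ s g :=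
      le_iSup₂ (f := fun (t : ℝ) (_ : 0 < t) => ENNReal.ofReal t * μ {ω | t < |g ω|} ^ (1 / s)) t ht

theorem measure_iUnion_rpow_le_weakNorm_iSup (μ : Measure Ω) {s : ℝ} (hs : 0 ≤ s)
    {ι : Type*} [Finite ι] {A : ι → Set Ω} {f : ι → Ω → ℝ} {t : ι → ℝ} (ht : ∀ i, 0 < t i)
    (hA : ∀ i, A i ⊆ {ω | t i < |f i ω|}) :
    μ (⋃ i, A i) ^ (1 / s) ≤ weakNorm μ s (fun ω => ⨆ i, |(t i)⁻¹ * f i ω|) := by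
  have hsub : (⋃ i, A i) ⊆ {ω | 1 < |(⨆ i, |(t i)⁻¹ * f i ω|)|} := iUnion_subset fun i ω hω => by
    calc (1 : ℝ)
      _ < |(t i)⁻¹ * f i ω| := by
        rw [abs_mul, abs_inv, abs_of_pos (ht i), ← div_eq_inv_mul, one_lt_div (ht i)]
        exact hA i hω
      _ ≤ ⨆ j, |(t j)⁻¹ * f j ω| :=
        le_ciSup (f := fun j => |(t j)⁻¹ * f j ω|) (Set.finite_range _).bddAbove i
      _ ≤ |(⨆ j, |(t j)⁻¹ * f j ω|)| := le_abs_self _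
  simpa using ofReal_mul_measure_rpow_le_weakNorm μ hs one_pos hsub

def MaximalWeakBound (μ : Measure Ω) (q p C : ℝ) (𝓕 : Set (Ω → ℝ)) : Prop :=
  ∀ (n : ℕ) (f : Fin n → Ω → ℝ), (∀ j, f j ∈ 𝓕) → ∀ c : Fin n → ℝ,
    weakNorm μ q (fun ω => ⨆ j, |c j * f j ω|) ≤ ENNReal.ofReal (C * (∑ j, |c j| ^ p) ^ (1 / p))

def IsBadSet (μ : Measure Ω) (𝓕 : Set (Ω → ℝ)) (p K : ℝ) (A : Set Ω) : Prop :=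
  MeasurableSet A ∧ ∃ f ∈ 𝓕, ∃ t > 0, A ⊆ {ω | t < |f ω|} ∧ K < t * μ.real A ^ (1 / p)

theorem IsBadSet.measure_ne_zero {𝓕 : Set (Ω → ℝ)} {p K : ℝ} {A : Set Ω}
    (hA : IsBadSet μ 𝓕 p K A) (hp : p ≠ 0) (hK : 0 ≤ K) : μ A ≠ 0 := by
  obtain ⟨-, -, -, t, -, -, hlt⟩ := hA
  intro h0
  rw [measureReal_def, h0, ENNReal.toReal_zero, Real.zero_rpow (by simpa using hp), mul_zero] at hlt
  exact hlt.not_ge hK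

namespace MaximalWeakBound

variable {q p C : ℝ} {𝓕 : Set (Ω → ℝ)}

theorem weakNorm_iSup_le (hmax : MaximalWeakBound μ q p C 𝓕) {ι : Type*} [Fintype ι] (f : ι → Ω → ℝ)
    (hf : ∀ i, f i ∈ 𝓕) (c : ι → ℝ) :
    weakNorm μ q (fun ω => ⨆ i, |c i * f i ω|) ≤
      ENNReal.ofReal (C * (∑ i, |c i| ^ p) ^ (1 / p)) := by
  obtain ⟨e⟩ : Nonempty (Fin (Fintype.card ι) ≃ ι) := ⟨(Fintype.equivFin ι).symm⟩
  have hsup : (fun ω => ⨆ j, |c (e j) * f (e j) ω|) = fun ω => ⨆ i, |c i * f i ω| :=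
    funext fun ω => e.iSup_comp (g := fun i => |c i * f i ω|)
  have := hmax _ (fun j => f (e j)) (fun j => hf _) (fun j => c (e j))
  rwa [hsup, e.sum_comp fun i => |c i| ^ p] at this

theorem measureReal_iUnion_rpow_le [IsFiniteMeasure μ] (hmax : MaximalWeakBound μ q p C 𝓕)
    (hq : 0 < q) (hp : 0 < p) (hC : 0 ≤ C) {K : ℝ} (hK : 0 < K) {ι : Type*} [Fintype ι]
    {A : ι → Set Ω} (hA : ∀ i, IsBadSet μ 𝓕 p K (A i)) (hd : Pairwise (Disjoint on A)) :
    μ.real (⋃ i, A i) ^ (1 / q) ≤ C / K * μ.real (⋃ i, A i) ^ (1 / p) := by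
  choose f hf t ht hsub hlt using fun i => (hA i).2
  set M := μ.real (⋃ i, A i)
  have hmaxA : M ^ (1 / q) ≤ C * (∑ i, |(t i)⁻¹| ^ p) ^ (1 / p) := by
    have := (measure_iUnion_rpow_le_weakNorm_iSup μ hq.le ht hsub).trans
      (weakNorm_iSup_le hmax f hf fun i => (t i)⁻¹)
    rw [← ofReal_measureReal, ENNReal.ofReal_rpow_of_nonneg measureReal_nonneg (by positivity)]
      at this
    exact (ENNReal.ofReal_le_ofReal_iff (by positivity)).1 this
  have hsum : ∑ i, |(t i)⁻¹| ^ p ≤ M / K ^ p := by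
    rw [show M = ∑ i, μ.real (A i) from measureReal_iUnion_fintype hd fun i => (hA i).1,
      Finset.sum_div]
    refine Finset.sum_le_sum fun i _ => ?_
    rw [abs_of_pos (inv_pos.2 (ht i))]
    exact inv_rpow_le_div_rpow_of_lt_mul_rpow hK (ht i) measureReal_nonneg hp (hlt i)
  calc M ^ (1 / q)
    _ ≤ C * (∑ i, |(t i)⁻¹| ^ p) ^ (1 / p) := hmaxA
    _ ≤ C * (M / K ^ p) ^ (1 / p) := by gcongr
    _ = C / K * M ^ (1 / p) := by
      rw [Real.div_rpow measureReal_nonneg (by positivity), ← Real.rpow_mul hK.le,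
        mul_one_div_cancel hp.ne', Real.rpow_one]
      ring

theorem measure_biUnion_finset_le [IsFiniteMeasure μ] (hmax : MaximalWeakBound μ q p C 𝓕)
    {r δ : ℝ} (hq : 0 < q) (hqp : q < p) (hr : 1 / r = 1 / q - 1 / p) (hC : 0 < C) (hδ : 0 < δ)
    {𝒮 : Finset (Set Ω)} (hbad : ∀ A ∈ 𝒮, IsBadSet μ 𝓕 p (C * δ ^ (-(1 / r))) A)
    (hd : (𝒮 : Set (Set Ω)).PairwiseDisjoint id) :
    μ (⋃ A ∈ 𝒮, A) ≤ ENNReal.ofReal δ := by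
  have hr0 : 0 < 1 / r := by rw [hr]; exact sub_pos.2 (one_div_lt_one_div_of_lt hq hqp)
  have hCK : C / (C * δ ^ (-(1 / r))) = δ ^ (1 / r) := by
    rw [Real.rpow_neg hδ.le]; field_simp
  have := measureReal_iUnion_rpow_le hmax hq (hq.trans hqp) hC.le (by positivity)
    (A := fun A : 𝒮 => A.1) (fun A => hbad A A.2)
    fun A B hAB => hd A.2 B.2 (Subtype.coe_ne_coe.2 hAB)
  rw [hCK, show 1 / q = 1 / p + 1 / r by rw [hr]; ring] at this
  have hunion : ⋃ A ∈ 𝒮, A = ⋃ A : 𝒮, A.1 := (iUnion_subtype (· ∈ 𝒮) Subtype.val).symm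
  rw [hunion, ← ofReal_measureReal]
  exact ENNReal.ofReal_le_ofReal (le_of_rpow_add_le_mul_rpow measureReal_nonneg hδ.le hr0 this)

end MaximalWeakBound

theorem weakNorm_indicator_le_of_forall_not_isBadSet [IsFiniteMeasure μ] {𝓕 : Set (Ω → ℝ)}
    {p K : ℝ} (hp : 0 ≤ p) {E : Set Ω} (hE : MeasurableSet E) {f : Ω → ℝ} (hf : f ∈ 𝓕)
    (hfm : Measurable f) (h : ∀ B ⊆ E, ¬ IsBadSet μ 𝓕 p K B) :
    weakNorm μ p (E.indicator f) ≤ ENNReal.ofReal K := by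
  refine iSup₂_le fun s hs => not_lt.1 fun hlt => h (E ∩ {ω | s < |f ω|}) inter_subset_left
    ⟨hE.inter (measurableSet_lt measurable_const hfm.abs), f, hf, s, hs, inter_subset_right, ?_⟩
  have hlevel : {ω | s < |E.indicator f ω|} = E ∩ {ω | s < |f ω|} := by
    ext ω
    by_cases hω : ω ∈ E <;> simp [hω, hs.le]
  rw [hlevel, ← ofReal_measureReal,
    ENNReal.ofReal_rpow_of_nonneg measureReal_nonneg (by positivity), ← ENNReal.ofReal_mul hs.le]
    at hlt
  exact (ENNReal.ofReal_lt_ofReal_iff'.1 hlt).1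

end Measure

/-- N2 ⇒ N3 of the extended Nikishin theorem: from the maximal estimate with constant `C`,
for every `0 < δ < 1` there is a set `E_δ` with `μ(E_δ) ≥ 1 - δ` and
`sup_{f∈𝓕} ‖1_{E_δ} f‖_{p,∞} ≤ C δ^{-1/r}`. -/
theorem nikishin_N2_implies_N3 {Ω : Type*} [MeasurableSpace Ω] (μ : Measure Ω)
    [IsProbabilityMeasure μ] (q p r C : ℝ) (hq : 0 < q) (hqp : q < p)
    (hr : 1 / r = 1 / q - 1 / p) (hC : 0 < C)
    (𝓕 : Set (Ω → ℝ)) (h𝓕 : ∀ f ∈ 𝓕, Measurable f ∧ ∀ ω, 0 ≤ f ω)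
    (hmax : ∀ (n : ℕ) (f : Fin n → Ω → ℝ), (∀ j, f j ∈ 𝓕) → ∀ c : Fin n → ℝ,
      weakNorm μ q (fun ω => ⨆ j, |c j * f j ω|) ≤
        ENNReal.ofReal (C * (∑ j, |c j| ^ p) ^ (1 / p))) :
    ∀ δ : ℝ, 0 < δ → δ < 1 →
      ∃ E : Set Ω, MeasurableSet E ∧ 1 - ENNReal.ofReal δ ≤ μ E ∧
        ∀ f ∈ 𝓕, weakNorm μ p (E.indicator f) ≤ ENNReal.ofReal (C * δ ^ (-(1 / r))) := by
  intro δ hδ _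
  have hp : 0 < p := hq.trans hqp
  obtain ⟨𝒜, hbad, hd, hmaximal⟩ := exists_maximal_pairwiseDisjoint
    (IsBadSet μ 𝓕 p (C * δ ^ (-(1 / r))))
  have hK : 0 ≤ C * δ ^ (-(1 / r)) := by positivity
  have hm : ∀ A ∈ 𝒜, MeasurableSet A := fun A hA => (hbad A hA).1
  have hc : 𝒜.Countable :=
    hd.countable_of_measure_ne_zero hm fun A hA => (hbad A hA).measure_ne_zero hp.ne' hK
  have hUm : MeasurableSet (⋃₀ 𝒜) := .sUnion hc hm
  have hU : μ (⋃₀ 𝒜) ≤ ENNReal.ofReal δ :=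
    measure_sUnion_le_of_forall_finset hc hd hm fun 𝒮 h𝒮 =>
      MaximalWeakBound.measure_biUnion_finset_le hmax hq hqp hr hC hδ
        (fun A hA => hbad A (h𝒮 hA)) (hd.subset h𝒮)
  refine ⟨(⋃₀ 𝒜)ᶜ, hUm.compl, ?_, fun f hf => ?_⟩
  · rw [prob_compl_eq_one_sub hUm]
    exact tsub_le_tsub_left hU 1
  · refine weakNorm_indicator_le_of_forall_not_isBadSet hp.le hUm.compl hf (h𝓕 f hf).1
      fun B hB hBbad => ?_
    exact (nonempty_of_measure_ne_zero (hBbad.measure_ne_zero hp.ne' hK)).ne_empty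
      (hmaximal B hBbad (subset_compl_iff_disjoint_right.1 hB))
end
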